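/- Let a ≥ 1 and let y : [0, x₀] → ℝ be a C¹ function satisfying y(t)² + y'(t)² ≤ a² for all t, with y(0) = 1. Then for all x ∈ [0, x₀] with x ≤ π/2, one has y(x) ≥ cos x − √(a² − 1) · sin x. -/

import Mathlib

/-!
For `c > a` (strictly, so that `|y| < c`) the function `θ = arccos (y / c)` is differentiable with `|θ'| = |y'| / √(c² - y²) ≤ 1`,
so `θ x ≤ θ 0 + x = arccos (1 / c) + x ≤ π`. As `cos` is decreasing on `[0, π]`, this gives
`y x ≥ c cos (arccos (1 / c) + x) = cos x - √(c² - 1) sin x`; now let `c → a⁺`.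
-/

open Real Set Filter Topology

theorem hasDerivAt_arccos_div {u : ℝ → ℝ} {u' c t : ℝ} (hc : 0 < c) (hu : HasDerivAt u u' t)
    (hlt : u t ^ 2 < c ^ 2) :
    HasDerivAt (fun s => arccos (u s / c)) (-u' / √(c ^ 2 - u t ^ 2)) t := by
  have hne_neg : u t / c ≠ -1 := by
    intro h
    rw [div_eq_iff hc.ne'] at h
    nlinarith
  have hne_one : u t / c ≠ 1 := by
    intro h
    rw [div_eq_iff hc.ne'] at h
    nlinarith
  have hsqrt : √(c ^ 2 - u t ^ 2) = c * √(1 - (u t / c) ^ 2) := by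
    rw [show c ^ 2 - u t ^ 2 = c ^ 2 * (1 - (u t / c) ^ 2) by field_simp,
      sqrt_mul (sq_nonneg c), sqrt_sq hc.le]
  refine ((hasDerivAt_arccos hne_neg hne_one).comp t (hu.div_const c)).congr_deriv ?_
  rw [hsqrt]
  field_simp

theorem arccos_div_le_arccos_div_add {y y' : ℝ → ℝ} {c s t : ℝ} (hc : 0 < c) (hst : s ≤ t)
    (hy : ∀ r ∈ Icc s t, HasDerivAt y (y' r) r)
    (hbound : ∀ r ∈ Icc s t, y r ^ 2 + y' r ^ 2 < c ^ 2) :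
    arccos (y t / c) ≤ arccos (y s / c) + (t - s) := by
  have hderiv : ∀ r ∈ Icc s t, HasDerivWithinAt (fun r => arccos (y r / c))
      (-y' r / √(c ^ 2 - y r ^ 2)) (Icc s t) r := fun r hr =>
    (hasDerivAt_arccos_div hc (hy r hr) (by nlinarith [hbound r hr])).hasDerivWithinAt
  have hderiv_le : ∀ r ∈ Icc s t, ‖-y' r / √(c ^ 2 - y r ^ 2)‖ ≤ 1 := by
    intro r hr
    have hpos : 0 < c ^ 2 - y r ^ 2 := by nlinarith [hbound r hr]
    rw [norm_div, norm_neg, Real.norm_eq_abs, Real.norm_eq_abs, abs_of_pos (sqrt_pos.2 hpos),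
      div_le_one (sqrt_pos.2 hpos)]
    exact abs_le_sqrt (by linarith [hbound r hr])
  have hlip := Convex.norm_image_sub_le_of_norm_hasDerivWithin_le hderiv hderiv_le
    (convex_Icc s t) (left_mem_Icc.2 hst) (right_mem_Icc.2 hst)
  rw [one_mul, Real.norm_eq_abs, Real.norm_eq_abs, abs_of_nonneg (sub_nonneg.2 hst)] at hlip
  linarith [le_abs_self (arccos (y t / c) - arccos (y s / c))]

theorem mul_cos_arccos_inv_add {c : ℝ} (hc : 1 ≤ c) (x : ℝ) :
    c * cos (arccos c⁻¹ + x) = cos x - √(c ^ 2 - 1) * sin x := by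
  have hc0 : 0 < c := by linarith
  have hsqrt : √(c ^ 2 - 1) = c * √(1 - c⁻¹ ^ 2) := by
    rw [show c ^ 2 - 1 = c ^ 2 * (1 - c⁻¹ ^ 2) by field_simp,
      sqrt_mul (sq_nonneg c), sqrt_sq hc0.le]
  have hinv_le : c⁻¹ ≤ 1 := inv_le_one_of_one_le₀ hc
  rw [cos_add, cos_arccos (by linarith [inv_pos.2 hc0]) hinv_le, sin_arccos, hsqrt]
  field_simp

theorem cos_sub_sqrt_mul_sin_le_of_sq_add_sq_lt {y y' : ℝ → ℝ} {c x : ℝ} (hc : 0 < c)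
    (hx : 0 ≤ x) (hxpi : x ≤ π / 2) (hy : ∀ t ∈ Icc 0 x, HasDerivAt y (y' t) t)
    (hbound : ∀ t ∈ Icc 0 x, y t ^ 2 + y' t ^ 2 < c ^ 2) (hy0 : y 0 = 1) :
    cos x - √(c ^ 2 - 1) * sin x ≤ y x := by
  have hc1 : 1 ≤ c := by
    have := hbound 0 (left_mem_Icc.2 hx)
    rw [hy0] at this
    nlinarith [sq_nonneg (y' 0)]
  have hθ := arccos_div_le_arccos_div_add hc hx hy hbound
  rw [hy0, sub_zero, one_div] at hθ
  have hyx : |y x| < c := abs_lt_of_sq_lt_sq (by nlinarith [hbound x (right_mem_Icc.2 hx)]) hc.le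
  have hcos : cos (arccos c⁻¹ + x) ≤ y x / c := by
    have hcos_arccos : cos (arccos (y x / c)) = y x / c :=
      cos_arccos (by rw [le_div_iff₀ hc]; linarith [neg_abs_le (y x)])
        (by rw [div_le_one hc]; linarith [le_abs_self (y x)])
    rw [← hcos_arccos]
    refine cos_le_cos_of_nonneg_of_le_pi (arccos_nonneg _) ?_ hθ
    linarith [arccos_le_pi_div_two.2 (inv_nonneg.2 hc.le)]
  rw [← mul_cos_arccos_inv_add hc1, ← mul_div_cancel₀ (y x) hc.ne']
  exact mul_le_mul_of_nonneg_left hcos hc.le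

theorem stmt3_general (a x₀ : ℝ) (ha : 1 ≤ a)
    (y y' : ℝ → ℝ)
    (hderiv : ∀ t ∈ Set.Icc (0 : ℝ) x₀, HasDerivAt y (y' t) t)
    (hineq : ∀ t ∈ Set.Icc (0 : ℝ) x₀, (y t) ^ 2 + (y' t) ^ 2 ≤ a ^ 2)
    (hy0 : y 0 = 1) :
    ∀ x ∈ Set.Icc (0 : ℝ) x₀, x ≤ π / 2 →
      Real.cos x - Real.sqrt (a ^ 2 - 1) * Real.sin x ≤ y x := by
  intro x ⟨hx, hxx₀⟩ hxpi
  have hsub : Icc 0 x ⊆ Icc 0 x₀ := Icc_subset_Icc_right hxx₀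
  have hlt : ∀ c, a < c → cos x - √(c ^ 2 - 1) * sin x ≤ y x := fun c hac =>
    cos_sub_sqrt_mul_sin_le_of_sq_add_sq_lt (by linarith) hx hxpi (fun t ht => hderiv t (hsub ht))
      (fun t ht => (hineq t (hsub ht)).trans_lt (by nlinarith)) hy0
  have hcont : Continuous fun c : ℝ => cos x - √(c ^ 2 - 1) * sin x := by fun_prop
  exact le_of_tendsto (hcont.tendsto a |>.mono_left nhdsWithin_le_nhds)
    (eventually_nhdsWithin_of_forall (s := Ioi a) hlt)

/-- Comparison estimate for the differential inequality `y² + (y')² ≤ a²`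
with `y(0) = 1` and `a ≥ 1`: for `0 ≤ x ≤ min(x₀, π/2)`,
`y(x) ≥ cos x − √(a² − 1) · sin x`. -/
theorem stmt3 (a x₀ : ℝ) (ha : 1 ≤ a) (hx₀ : 0 ≤ x₀)
    (y y' : ℝ → ℝ)
    (hderiv : ∀ t ∈ Set.Icc (0 : ℝ) x₀, HasDerivAt y (y' t) t)
    (hcont : ContinuousOn y' (Set.Icc (0 : ℝ) x₀))
    (hineq : ∀ t ∈ Set.Icc (0 : ℝ) x₀, (y t) ^ 2 + (y' t) ^ 2 ≤ a ^ 2)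
    (hy0 : y 0 = 1) :
    ∀ x ∈ Set.Icc (0 : ℝ) x₀, x ≤ π / 2 →
      Real.cos x - Real.sqrt (a ^ 2 - 1) * Real.sin x ≤ y x :=
  stmt3_general a x₀ ha y y' hderiv hineq hy0
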